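/- arXiv:2401.03083 — 3 statements merged into one kernel-verified Lean document; each statement's English description precedes it below -/
import Mathlib

section
/- Let L : Ω → ℝ^{m×m} be a random matrix that is almost surely symmetric positive semidefinite with L·1 = 0, and set W := I - L. Assume WᵀW is Bochner-integrable. Then ρ := ‖E[WᵀW] - J‖ satisfies ρ ≤ E[max((1 - λ₂(L))², (1 - λ_m(L))²)], where λ₂(L) and λ_m(L) denote the second-smallest and largest eigenvalues of L (counted with multiplicity). -/
open Matrix MeasureTheory

/-- The spectral norm (largest singular value) of a real `m × m` matrix,
realized as the operator norm of the induced map on Euclidean space. -/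
noncomputable def specNorm {m : ℕ} (A : Matrix (Fin m) (Fin m) ℝ) : ℝ :=
  ‖Matrix.toEuclideanCLM (𝕜 := ℝ) (n := Fin m) A‖

/-- The matrix `J = (1/m)·11ᵀ`, with all entries equal to `1/m`. -/
noncomputable def Jmat (m : ℕ) : Matrix (Fin m) (Fin m) ℝ :=
  Matrix.of fun _ _ => (m : ℝ)⁻¹

open Classical in
/-- The eigenvalues of a real symmetric matrix, sorted in nondecreasing order
(counted with multiplicity); junk value `0` if the matrix is not symmetric.
`eigSorted L ⟨i-1, _⟩` is the i-th smallest eigenvalue `λ_i(L)`. -/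
noncomputable def eigSorted {m : ℕ} (L : Matrix (Fin m) (Fin m) ℝ) : Fin m → ℝ :=
  if h : L.IsHermitian then h.eigenvalues ∘ Tuple.sort h.eigenvalues else 0

section Bridge

variable {m : ℕ}

/-- view a plain vector as an element of Euclidean space -/
noncomputable def toE {m : ℕ} (x : Fin m → ℝ) : EuclideanSpace ℝ (Fin m) :=
  (WithLp.equiv 2 (Fin m → ℝ)).symm x

lemma inner_toE (x y : Fin m → ℝ) : (inner ℝ (toE x) (toE y) : ℝ) = x ⬝ᵥ y := by
  simp [toE, PiLp.inner_apply, dotProduct, mul_comm]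

lemma toE_apply (x : Fin m → ℝ) (i : Fin m) : toE x i = x i := rfl

lemma clm_toE (A : Matrix (Fin m) (Fin m) ℝ) (x : Fin m → ℝ) :
    Matrix.toEuclideanCLM (𝕜 := ℝ) A (toE x) = toE (A *ᵥ x) := by
  rw [toE, Matrix.toEuclideanCLM_toLp]; rfl

lemma norm_toE_sq (x : Fin m → ℝ) : ‖toE x‖ ^ 2 = x ⬝ᵥ x := by
  rw [← real_inner_self_eq_norm_sq, inner_toE]

lemma dot_self_nonneg (x : Fin m → ℝ) : 0 ≤ x ⬝ᵥ x := by
  simpa [dotProduct] using Finset.sum_nonneg fun i _ => mul_self_nonneg (x i)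

lemma norm_toE (x : Fin m → ℝ) : ‖toE x‖ = Real.sqrt (x ⬝ᵥ x) := by
  rw [← norm_toE_sq, Real.sqrt_sq (norm_nonneg _)]

lemma quad_abs_le_specNorm (A : Matrix (Fin m) (Fin m) ℝ) (x : Fin m → ℝ) :
    |(A *ᵥ x) ⬝ᵥ x| ≤ specNorm A * (x ⬝ᵥ x) := by
  have h1 : (A *ᵥ x) ⬝ᵥ x = (inner ℝ (toE (A *ᵥ x)) (toE x) : ℝ) := (inner_toE _ _).symm
  rw [h1, ← clm_toE]
  calc |(inner ℝ (Matrix.toEuclideanCLM (𝕜 := ℝ) A (toE x)) (toE x) : ℝ)|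
      ≤ ‖Matrix.toEuclideanCLM (𝕜 := ℝ) A (toE x)‖ * ‖toE x‖ := abs_real_inner_le_norm _ _
    _ ≤ (specNorm A * ‖toE x‖) * ‖toE x‖ := by
        gcongr; exact (Matrix.toEuclideanCLM (𝕜 := ℝ) A).le_opNorm _
    _ = specNorm A * (x ⬝ᵥ x) := by rw [mul_assoc, ← sq, norm_toE_sq]

lemma specNorm_nonneg (A : Matrix (Fin m) (Fin m) ℝ) : 0 ≤ specNorm A := norm_nonneg _

lemma bilin_symm {S : Matrix (Fin m) (Fin m) ℝ} (hS : Sᵀ = S) (x y : Fin m → ℝ) :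
    (S *ᵥ x) ⬝ᵥ y = (S *ᵥ y) ⬝ᵥ x := by
  rw [dotProduct_comm, dotProduct_mulVec, ← mulVec_transpose, hS]

/-- norm bound from quadratic form bound, for symmetric matrices -/
lemma specNorm_le_of_quad {S : Matrix (Fin m) (Fin m) ℝ} (hS : Sᵀ = S) {c : ℝ} (hc : 0 ≤ c)
    (h : ∀ x : Fin m → ℝ, |(S *ᵥ x) ⬝ᵥ x| ≤ c * (x ⬝ᵥ x)) : specNorm S ≤ c := by
  have key : ∀ x y : Fin m → ℝ, (S *ᵥ x) ⬝ᵥ y ≤ c / 2 * (x ⬝ᵥ x + y ⬝ᵥ y) := by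
    intro x y
    have h1 := abs_le.1 (h (x + y))
    have h2 := abs_le.1 (h (x - y))
    have e1 : (S *ᵥ (x + y)) ⬝ᵥ (x + y)
        = (S *ᵥ x) ⬝ᵥ x + 2 * ((S *ᵥ x) ⬝ᵥ y) + (S *ᵥ y) ⬝ᵥ y := by
      simp only [mulVec_add, add_dotProduct, dotProduct_add, bilin_symm hS y x]; ring
    have e2 : (S *ᵥ (x - y)) ⬝ᵥ (x - y)
        = (S *ᵥ x) ⬝ᵥ x - 2 * ((S *ᵥ x) ⬝ᵥ y) + (S *ᵥ y) ⬝ᵥ y := by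
      simp only [mulVec_sub, sub_dotProduct, dotProduct_sub, bilin_symm hS y x]; ring
    have e3 : (x + y) ⬝ᵥ (x + y) = x ⬝ᵥ x + 2 * (x ⬝ᵥ y) + y ⬝ᵥ y := by
      rw [add_dotProduct, dotProduct_add, dotProduct_add, dotProduct_comm y x]; ring
    have e4 : (x - y) ⬝ᵥ (x - y) = x ⬝ᵥ x - 2 * (x ⬝ᵥ y) + y ⬝ᵥ y := by
      rw [sub_dotProduct, dotProduct_sub, dotProduct_sub, dotProduct_comm y x]; ring
    rw [e1, e3] at h1
    rw [e2, e4] at h2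
    linarith [h1.2, h2.1]
  have hmain : ∀ v : Fin m → ℝ, (S *ᵥ v) ⬝ᵥ (S *ᵥ v) ≤ c ^ 2 * (v ⬝ᵥ v) := by
    intro v
    set P := v ⬝ᵥ v with hP
    set Q := (S *ᵥ v) ⬝ᵥ (S *ᵥ v) with hQ
    have hPn : 0 ≤ P := dot_self_nonneg v
    have hQn : 0 ≤ Q := dot_self_nonneg _
    have hk := key (Q • v) ((c * P) • (S *ᵥ v))
    have hBv : (S *ᵥ (Q • v)) ⬝ᵥ ((c * P) • (S *ᵥ v)) = Q * (c * P) * Q := by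
      rw [mulVec_smul, smul_dotProduct, dotProduct_smul]
      simp [smul_eq_mul]; ring
    have hxx : (Q • v) ⬝ᵥ (Q • v) = Q ^ 2 * P := by
      rw [smul_dotProduct, dotProduct_smul]; simp [smul_eq_mul]; ring
    have hyy : ((c * P) • (S *ᵥ v)) ⬝ᵥ ((c * P) • (S *ᵥ v)) = (c * P) ^ 2 * Q := by
      rw [smul_dotProduct, dotProduct_smul]; simp [smul_eq_mul]; ring
    rw [hBv, hxx, hyy] at hk
    -- c P Q² ≤ c/2 (Q² P + c² P² Q)
    rcases eq_or_lt_of_le hQn with hQ0 | hQ0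
    · nlinarith
    rcases eq_or_lt_of_le hPn with hP0 | hP0
    · exfalso
      have : v = 0 := dotProduct_self_eq_zero.1 hP0.symm
      rw [this] at hQ
      simp at hQ
      exact absurd hQ hQ0.ne'
    rcases eq_or_lt_of_le hc with hc0 | hc0
    · have := key v (S *ᵥ v)
      nlinarith
    · nlinarith [mul_pos (mul_pos hc0 hP0) hQ0]
  rw [specNorm]
  apply ContinuousLinearMap.opNorm_le_bound _ hc
  intro x
  set v : Fin m → ℝ := WithLp.equiv 2 (Fin m → ℝ) x with hv
  have hx : x = toE v := rfl
  rw [hx, clm_toE]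
  have h1 : ‖toE (S *ᵥ v)‖ ^ 2 ≤ (c * ‖toE v‖) ^ 2 := by
    rw [norm_toE_sq, mul_pow, norm_toE_sq]
    exact hmain v
  exact le_of_pow_le_pow_left₀ two_ne_zero (by positivity) h1


section Pointwise

variable {m : ℕ}

lemma sq_le_max_of_between {a t b c : ℝ} (h1 : a ≤ t) (h2 : t ≤ b)
    (hc1 : (1 - a) ^ 2 ≤ c) (hc2 : (1 - b) ^ 2 ≤ c) : (1 - t) ^ 2 ≤ c := by
  rcases le_total t 1 with h | h
  · nlinarith
  · nlinarith

lemma specNorm_ge_of_eigen {A : Matrix (Fin m) (Fin m) ℝ} {v : Fin m → ℝ} {ρ : ℝ}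
    (hv : v ≠ 0) (hρ : 0 ≤ ρ) (h : A *ᵥ v = ρ • v) : ρ ≤ specNorm A := by
  have hv2 : 0 < v ⬝ᵥ v :=
    lt_of_le_of_ne (dot_self_nonneg v) fun hh => hv (dotProduct_self_eq_zero.1 hh.symm)
  have hnorm : 0 < ‖toE v‖ := by rw [norm_toE]; exact Real.sqrt_pos.2 hv2
  have hle := (Matrix.toEuclideanCLM (𝕜 := ℝ) A).le_opNorm (toE v)
  rw [clm_toE, h] at hle
  have hsmul : toE (ρ • v) = ρ • toE v := rfl
  rw [hsmul, norm_smul, Real.norm_of_nonneg hρ] at hle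
  exact le_of_mul_le_mul_right hle hnorm

lemma bilin_expand {A : Matrix (Fin m) (Fin m) ℝ} (hA : Aᵀ = A)
    (b : OrthonormalBasis (Fin m) ℝ (EuclideanSpace ℝ (Fin m))) (α : Fin m → ℝ)
    (hb : ∀ i, A *ᵥ ⇑(b i) = α i • ⇑(b i)) (x y : Fin m → ℝ) :
    (A *ᵥ x) ⬝ᵥ y = ∑ i, α i * ((⇑(b i) ⬝ᵥ x) * (⇑(b i) ⬝ᵥ y)) := by
  have hs := b.sum_inner_mul_inner (toE y) (toE (A *ᵥ x))
  have h1 : ∀ i, (inner ℝ (b i) (toE (A *ᵥ x)) : ℝ) = α i * (⇑(b i) ⬝ᵥ x) := by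
    intro i
    have hh : (inner ℝ (b i) (toE (A *ᵥ x)) : ℝ) = ⇑(b i) ⬝ᵥ (A *ᵥ x) := inner_toE _ _
    rw [hh, dotProduct_comm, bilin_symm hA, hb i, smul_dotProduct, smul_eq_mul]
  have h2 : ∀ i, (inner ℝ (toE y) (b i) : ℝ) = ⇑(b i) ⬝ᵥ y := by
    intro i
    rw [real_inner_comm]
    exact inner_toE _ _
  have h3 : (inner ℝ (toE y) (toE (A *ᵥ x)) : ℝ) = y ⬝ᵥ (A *ᵥ x) := inner_toE _ _
  rw [dotProduct_comm, ← h3, ← hs]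
  refine Finset.sum_congr rfl fun i _ => ?_
  rw [h1 i, h2 i]; ring

lemma dot_expand (b : OrthonormalBasis (Fin m) ℝ (EuclideanSpace ℝ (Fin m)))
    (x y : Fin m → ℝ) : x ⬝ᵥ y = ∑ i, (⇑(b i) ⬝ᵥ x) * (⇑(b i) ⬝ᵥ y) := by
  have := bilin_expand (A := (1 : Matrix (Fin m) (Fin m) ℝ)) (by simp) b (fun _ => 1)
    (fun i => by simp) x y
  simpa using this

lemma Jmat_mulVec (x : Fin m → ℝ) :
    Jmat m *ᵥ x = (((fun _ => (1 : ℝ)) ⬝ᵥ x) / m) • (fun _ => (1 : ℝ)) := by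
  funext i
  simp [Jmat, mulVec, dotProduct, div_eq_mul_inv, Finset.sum_mul, mul_comm]

lemma Jmat_transpose : (Jmat m)ᵀ = Jmat m := by
  ext i j; simp [Jmat]

end Pointwise

lemma pointwise_spec {m : ℕ} (hm : 2 ≤ m) {L : Matrix (Fin m) (Fin m) ℝ}
    (hL : L.PosSemidef) (h1 : L *ᵥ (fun _ => (1 : ℝ)) = 0) :
    specNorm ((1 - L)ᵀ * (1 - L) - Jmat m)
      = max ((1 - eigSorted L ⟨1, hm⟩) ^ 2) ((1 - eigSorted L ⟨m - 1, Nat.sub_lt (by omega) Nat.one_pos⟩) ^ 2) := by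
  haveI : NeZero m := ⟨by omega⟩
  have hmR : (2 : ℝ) ≤ (m : ℝ) := by exact_mod_cast hm
  have hm0 : (m : ℝ) ≠ 0 := by positivity
  set u : Fin m → ℝ := fun _ => 1 with hu
  have hH : L.IsHermitian := hL.1
  have hLt : Lᵀ = L := by
    have h := hH
    rwa [Matrix.IsHermitian, conjTranspose_eq_transpose_of_trivial] at h
  set W : Matrix (Fin m) (Fin m) ℝ := 1 - L with hWdef
  have hWt : Wᵀ = W := by rw [hWdef, transpose_sub, transpose_one, hLt]
  have hWWt : (W * W)ᵀ = W * W := by rw [transpose_mul, hWt]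
  have hstmt : (1 - L)ᵀ * (1 - L) = W * W := by rw [← hWdef, hWt]
  have hAt : (W * W - Jmat m)ᵀ = W * W - Jmat m := by
    rw [transpose_sub, hWWt, Jmat_transpose]
  set b := hH.eigenvectorBasis with hbdef
  set ν := hH.eigenvalues with hνdef
  set σ := Tuple.sort ν with hσdef
  set p1 : Fin m := ⟨1, hm⟩ with hp1
  set pm : Fin m := ⟨m - 1, Nat.sub_lt (by omega) Nat.one_pos⟩ with hpm
  have heig : ∀ p : Fin m, eigSorted L p = ν (σ p) := by
    intro p
    simp only [eigSorted, dif_pos hH]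
    rfl
  set l2 := ν (σ p1) with hl2def
  set lm := ν (σ pm) with hlmdef
  set c := max ((1 - l2) ^ 2) ((1 - lm) ^ 2) with hcdef
  have hcl2 : (1 - l2) ^ 2 ≤ c := le_max_left _ _
  have hclm : (1 - lm) ^ 2 ≤ c := le_max_right _ _
  have hc0 : 0 ≤ c := le_trans (sq_nonneg _) hcl2
  -- eigen equations
  have hbe : ∀ i, L *ᵥ ⇑(b i) = ν i • ⇑(b i) := fun i => hH.mulVec_eigenvectorBasis i
  have hWb : ∀ i, W *ᵥ ⇑(b i) = (1 - ν i) • ⇑(b i) := by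
    intro i
    rw [hWdef, sub_mulVec, one_mulVec, hbe i, sub_smul, one_smul]
  have hWWb : ∀ i, (W * W) *ᵥ ⇑(b i) = ((1 - ν i) ^ 2) • ⇑(b i) := by
    intro i
    rw [← mulVec_mulVec, hWb i, mulVec_smul, hWb i, smul_smul, ← sq]
  -- monotone sorted eigenvalues
  have hmono : Monotone (ν ∘ σ) := Tuple.monotone_sort ν
  have hnn : ∀ i, 0 ≤ ν i := fun i => hL.eigenvalues_nonneg i
  have hlm' : ∀ i, ν i ≤ lm := by
    intro i
    have h2 : σ.symm i ≤ pm := by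
      rw [Fin.le_def]
      have := (σ.symm i).isLt
      simp only [hpm]
      omega
    have := hmono h2
    simpa [Function.comp, σ.apply_symm_apply] using this
  have hl2p : ∀ i, σ.symm i ≠ 0 → l2 ≤ ν i := by
    intro i hi
    have h2 : p1 ≤ σ.symm i := by
      rw [Fin.le_def]
      have hne : (σ.symm i).val ≠ 0 := fun hh => hi (Fin.ext hh)
      simp only [hp1]
      omega
    have := hmono h2
    simpa [Function.comp, σ.apply_symm_apply] using this
  -- coordinates of the all-ones vector
  set e : Fin m → ℝ := fun i => ⇑(b i) ⬝ᵥ u with hedef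
  have hνe : ∀ i, ν i * e i = 0 := by
    intro i
    have : ν i * e i = (ν i • ⇑(b i)) ⬝ᵥ u := by rw [smul_dotProduct, smul_eq_mul]
    rw [this, ← hbe i, bilin_symm hLt, h1, zero_dotProduct]
  have huu : u ⬝ᵥ u = (m : ℝ) := by simp [hu, dotProduct]
  have hzle : (0 : Fin m) ≤ p1 := by simp [Fin.le_def, hp1]
  have hee : ∑ i, e i ^ 2 = (m : ℝ) := by
    have h := (dot_expand b u u).symm
    rw [huu] at h
    rw [← h]
    exact Finset.sum_congr rfl fun i _ => pow_two (e i)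
  have hwe1 : ∀ i, (1 - ν i) ^ 2 * e i = e i := fun i => by
    linear_combination (ν i - 2) * hνe i
  -- orthonormality in dot-product form
  have hbd : ∀ i j, ⇑(b i) ⬝ᵥ ⇑(b j) = if i = j then (1 : ℝ) else 0 := by
    intro i j
    have := orthonormal_iff_ite.1 b.orthonormal i j
    rw [← inner_toE]
    exact this
  -- quadratic form bound
  have hquad : ∀ x : Fin m → ℝ, 0 ≤ ((W * W - Jmat m) *ᵥ x) ⬝ᵥ x ∧
      ((W * W - Jmat m) *ᵥ x) ⬝ᵥ x ≤ c * (x ⬝ᵥ x) := by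
    intro x
    set d : Fin m → ℝ := fun i => ⇑(b i) ⬝ᵥ x with hddef
    set s := u ⬝ᵥ x with hsdef
    set t := s / (m : ℝ) with htdef
    set d' : Fin m → ℝ := fun i => d i - t * e i with hd'def
    have hsed : s = ∑ i, e i * d i := dot_expand b u x
    have QW : ((W * W) *ᵥ x) ⬝ᵥ x = ∑ i, (1 - ν i) ^ 2 * d i ^ 2 := by
      have h := bilin_expand hWWt b (fun i => (1 - ν i) ^ 2) hWWb x x
      rw [h]
      exact Finset.sum_congr rfl fun i _ => by rw [← pow_two]
    have QJ : (Jmat m *ᵥ x) ⬝ᵥ x = s ^ 2 / m := by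
      rw [Jmat_mulVec, smul_dotProduct, smul_eq_mul, ← hsdef]
      field_simp
    have Qdef : ((W * W - Jmat m) *ᵥ x) ⬝ᵥ x = ∑ i, (1 - ν i) ^ 2 * d i ^ 2 - s ^ 2 / m := by
      rw [sub_mulVec, sub_dotProduct, QW, QJ]
    have hde : ∑ i, d' i * e i = 0 := by
      have expand : ∑ i, d' i * e i = ∑ i, e i * d i - t * ∑ i, e i ^ 2 := by
        rw [Finset.mul_sum, ← Finset.sum_sub_distrib]
        exact Finset.sum_congr rfl fun i _ => by simp only [hd'def]; ring
      rw [expand, ← hsed, hee, htdef]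
      field_simp
      ring
    have hsum : ∀ w : Fin m → ℝ, (∀ i, w i * e i = e i) →
        ∑ i, w i * d i ^ 2 = ∑ i, w i * d' i ^ 2 + s ^ 2 / m := by
      intro w hw
      have hterm : ∀ i, w i * d i ^ 2 = w i * d' i ^ 2 + 2 * t * (d' i * e i) + t ^ 2 * e i ^ 2 := by
        intro i
        simp only [hd'def]
        linear_combination (2 * t * (d i - t * e i) + t ^ 2 * e i) * hw i
      calc ∑ i, w i * d i ^ 2
          = ∑ i, (w i * d' i ^ 2 + 2 * t * (d' i * e i) + t ^ 2 * e i ^ 2) :=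
            Finset.sum_congr rfl fun i _ => hterm i
        _ = ∑ i, w i * d' i ^ 2 + 2 * t * (∑ i, d' i * e i) + t ^ 2 * ∑ i, e i ^ 2 := by
            rw [Finset.sum_add_distrib, Finset.sum_add_distrib, Finset.mul_sum, Finset.mul_sum]
        _ = ∑ i, w i * d' i ^ 2 + s ^ 2 / m := by
            rw [hde, hee, htdef]
            field_simp
            ring
    have hQeq : ((W * W - Jmat m) *ᵥ x) ⬝ᵥ x = ∑ i, (1 - ν i) ^ 2 * d' i ^ 2 := by
      rw [Qdef, hsum (fun i => (1 - ν i) ^ 2) hwe1]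
      ring
    have hperterm : ∀ i, (1 - ν i) ^ 2 * d' i ^ 2 ≤ c * d' i ^ 2 := by
      intro i
      by_cases hi : σ.symm i = 0
      · by_cases hl2 : l2 = 0
        · have hν0 : ν i = 0 := by
            have hiσ : i = σ 0 := by rw [← hi, σ.apply_symm_apply]
            have hle : ν (σ 0) ≤ l2 := hmono hzle
            have := hnn i
            rw [hiσ] at this ⊢
            rw [hl2] at hle
            linarith
          have : (1 - ν i) ^ 2 ≤ c := by
            rw [hν0]
            calc (1 - (0:ℝ)) ^ 2 = (1 - l2) ^ 2 := by rw [hl2]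
              _ ≤ c := hcl2
          exact mul_le_mul_of_nonneg_right this (sq_nonneg _)
        · -- l2 ≠ 0 : the coefficient vanishes
          have hne : ∀ j, j ≠ i → e j = 0 := by
            intro j hj
            have hsj : σ.symm j ≠ 0 := by
              intro hh
              exact hj (by rw [← σ.apply_symm_apply j, hh, ← hi, σ.apply_symm_apply])
            have hpos : 0 < ν j :=
              lt_of_lt_of_le (lt_of_le_of_ne (hnn (σ p1)) (Ne.symm hl2)) (hl2p j hsj)
            exact (mul_eq_zero.1 (hνe j)).resolve_left hpos.ne'
          have hei : e i ^ 2 = (m : ℝ) := by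
            rw [← hee]
            symm
            apply Finset.sum_eq_single
            · intro j _ hj; rw [hne j hj]; ring
            · intro h; exact absurd (Finset.mem_univ i) h
          have hsei : s = e i * d i := by
            rw [hsed]
            apply Finset.sum_eq_single
            · intro j _ hj; rw [hne j hj]; ring
            · intro h; exact absurd (Finset.mem_univ i) h
          have hd'0 : d' i = 0 := by
            have ht' : t * e i = d i := by
              rw [htdef, hsei]
              field_simp
              linear_combination d i * hei
            simp only [hd'def]
            rw [ht']
            ring
          rw [hd'0]
          simp
      · have h2 := hl2p i hi
        have hsq := sq_le_max_of_between h2 (hlm' i) hcl2 hclm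
        exact mul_le_mul_of_nonneg_right hsq (sq_nonneg _)
    constructor
    · rw [hQeq]
      exact Finset.sum_nonneg fun i _ => mul_nonneg (sq_nonneg _) (sq_nonneg _)
    · have hstep : ∑ i, (1 - ν i) ^ 2 * d' i ^ 2 ≤ c * ∑ i, d' i ^ 2 := by
        rw [Finset.mul_sum]
        exact Finset.sum_le_sum fun i _ => hperterm i
      have hd's : ∑ i, d' i ^ 2 ≤ x ⬝ᵥ x := by
        have hone : ∀ i : Fin m, (1:ℝ) * e i = e i := fun i => one_mul _
        have := hsum (fun _ => 1) hone
        simp only [one_mul] at this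
        have hxx : x ⬝ᵥ x = ∑ i, d i ^ 2 := by
          have := dot_expand b x x
          rw [this]
          exact Finset.sum_congr rfl fun i _ => (sq (d i)).symm ▸ rfl
        have hs2 : 0 ≤ s ^ 2 / m := by positivity
        rw [hxx, this]
        linarith
      rw [hQeq]
      calc ∑ i, (1 - ν i) ^ 2 * d' i ^ 2 ≤ c * ∑ i, d' i ^ 2 := hstep
        _ ≤ c * (x ⬝ᵥ x) := mul_le_mul_of_nonneg_left hd's hc0
  -- upper bound
  have hupper : specNorm (W * W - Jmat m) ≤ c := by
    apply specNorm_le_of_quad hAt hc0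
    intro x
    rw [abs_le]
    refine ⟨?_, (hquad x).2⟩
    have := (hquad x).1
    have := mul_nonneg hc0 (dot_self_nonneg x)
    linarith
  -- lower bounds
  have hperp : ∀ j, e j = 0 → (1 - ν j) ^ 2 ≤ specNorm (W * W - Jmat m) := by
    intro j hej
    have hbne : ⇑(b j) ≠ (0 : Fin m → ℝ) := by
      intro h0
      have hb1 : ‖b j‖ = 1 := b.orthonormal.1 j
      rw [show b j = toE ⇑(b j) from rfl, h0] at hb1
      rw [show toE (0 : Fin m → ℝ) = 0 from rfl, norm_zero] at hb1
      norm_num at hb1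
    apply specNorm_ge_of_eigen hbne (sq_nonneg _)
    rw [sub_mulVec, hWWb j, Jmat_mulVec]
    have : (fun _ => (1:ℝ)) ⬝ᵥ ⇑(b j) = e j := by rw [hedef, dotProduct_comm]
    rw [this, hej]
    rw [zero_div, zero_smul, sub_zero]
  have hone : ν (σ p1) = 0 → (1 : ℝ) ≤ specNorm (W * W - Jmat m) := by
    intro h0
    by_cases he1 : e (σ p1) = 0
    · have := hperp (σ p1) he1
      rw [h0] at this
      simpa using this
    · set v : Fin m → ℝ := e (σ p1) • ⇑(b (σ 0)) - e (σ 0) • ⇑(b (σ p1)) with hvdef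
      have hν00 : ν (σ 0) = 0 := by
        have hle : ν (σ 0) ≤ l2 := hmono hzle
        have := hnn (σ 0)
        rw [hl2def, h0] at hle
        linarith
      have hσne : σ 0 ≠ σ p1 := by
        intro hh
        have h01 := σ.injective hh
        apply_fun Fin.val at h01
        simp [hp1] at h01
      have hLv : L *ᵥ v = 0 := by
        rw [hvdef, mulVec_sub, mulVec_smul, mulVec_smul, hbe, hbe, hν00, h0]
        rw [zero_smul, zero_smul, smul_zero, smul_zero, sub_zero]
      have hvne : v ≠ 0 := by
        intro hh
        apply he1
        have : ⇑(b (σ 0)) ⬝ᵥ v = e (σ p1) := by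
          rw [hvdef, dotProduct_sub, dotProduct_smul, dotProduct_smul, hbd, hbd]
          rw [if_pos rfl, if_neg hσne]
          simp only [smul_eq_mul]
          ring
        rw [hh, dotProduct_zero] at this
        exact this.symm
      have huv : u ⬝ᵥ v = 0 := by
        rw [hvdef, dotProduct_sub, dotProduct_smul, dotProduct_smul]
        have h01 : u ⬝ᵥ ⇑(b (σ 0)) = e (σ 0) := by rw [hedef, dotProduct_comm]
        have h02 : u ⬝ᵥ ⇑(b (σ p1)) = e (σ p1) := by rw [hedef, dotProduct_comm]
        rw [h01, h02]
        simp only [smul_eq_mul]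
        ring
      have hWv : W *ᵥ v = v := by
        rw [hWdef, sub_mulVec, one_mulVec, hLv, sub_zero]
      have heig : (W * W - Jmat m) *ᵥ v = (1 : ℝ) • v := by
        rw [sub_mulVec, ← mulVec_mulVec, hWv, hWv, Jmat_mulVec, huv]
        rw [zero_div, zero_smul, sub_zero, one_smul]
      exact specNorm_ge_of_eigen hvne zero_le_one heig
  have hlow2 : (1 - l2) ^ 2 ≤ specNorm (W * W - Jmat m) := by
    by_cases h0 : ν (σ p1) = 0
    · rw [hl2def, h0]
      simpa using hone h0
    · apply hperp (σ p1)
      exact (mul_eq_zero.1 (hνe (σ p1))).resolve_left h0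
  have hlowm : (1 - lm) ^ 2 ≤ specNorm (W * W - Jmat m) := by
    by_cases h0 : ν (σ pm) = 0
    · have hp10 : ν (σ p1) = 0 := by
        have hle : ν (σ p1) ≤ ν (σ pm) := hmono (by rw [Fin.le_def]; simp only [hp1, hpm]; omega)
        have := hnn (σ p1)
        rw [h0] at hle
        linarith
      rw [hlmdef, h0]
      simpa using hone hp10
    · apply hperp (σ pm)
      exact (mul_eq_zero.1 (hνe (σ pm))).resolve_left h0
  rw [hstmt, heig, heig]
  exact le_antisymm hupper (max_le hlow2 hlowm)

section SumAbs

variable {m : ℕ}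

lemma quad_sum (S : Matrix (Fin m) (Fin m) ℝ) (x : Fin m → ℝ) :
    (S *ᵥ x) ⬝ᵥ x = ∑ i, ∑ j, S i j * x j * x i := by
  simp only [dotProduct, mulVec]
  exact Finset.sum_congr rfl fun i _ => Finset.sum_mul _ _ _

lemma entry_sq_le (x : Fin m → ℝ) (i j : Fin m) : |x j * x i| ≤ x ⬝ᵥ x := by
  have hii : x i * x i ≤ x ⬝ᵥ x :=
    Finset.single_le_sum (f := fun k => x k * x k) (fun k _ => mul_self_nonneg _)
      (Finset.mem_univ i)
  have hjj : x j * x j ≤ x ⬝ᵥ x :=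
    Finset.single_le_sum (f := fun k => x k * x k) (fun k _ => mul_self_nonneg _)
      (Finset.mem_univ j)
  have habs := abs_mul (x j) (x i)
  nlinarith [abs_nonneg (x j), abs_nonneg (x i), sq_abs (x j), sq_abs (x i),
    sq_nonneg (|x j| - |x i|), abs_nonneg (x j * x i)]

lemma specNorm_le_sum_abs {S : Matrix (Fin m) (Fin m) ℝ} (hS : Sᵀ = S) :
    specNorm S ≤ ∑ i, ∑ j, |S i j| := by
  apply specNorm_le_of_quad hS
    (Finset.sum_nonneg fun i _ => Finset.sum_nonneg fun j _ => abs_nonneg _)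
  intro x
  rw [quad_sum]
  calc |∑ i, ∑ j, S i j * x j * x i|
      ≤ ∑ i, |∑ j, S i j * x j * x i| := Finset.abs_sum_le_sum_abs _ _
    _ ≤ ∑ i, ∑ j, |S i j * x j * x i| :=
        Finset.sum_le_sum fun i _ => Finset.abs_sum_le_sum_abs _ _
    _ ≤ ∑ i, ∑ j, |S i j| * (x ⬝ᵥ x) := by
        refine Finset.sum_le_sum fun i _ => Finset.sum_le_sum fun j _ => ?_
        rw [mul_assoc, abs_mul]
        exact mul_le_mul_of_nonneg_left (entry_sq_le x i j) (abs_nonneg _)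
    _ = (∑ i, ∑ j, |S i j|) * (x ⬝ᵥ x) := by
        rw [Finset.sum_mul]
        exact Finset.sum_congr rfl fun i _ => (Finset.sum_mul _ _ _).symm

end SumAbs

section Meas

noncomputable def matCLM (m : ℕ) : (Fin m → Fin m → ℝ) →ₗ[ℝ]
    (EuclideanSpace ℝ (Fin m) →L[ℝ] EuclideanSpace ℝ (Fin m)) where
  toFun M := Matrix.toEuclideanCLM (𝕜 := ℝ) (Matrix.of M)
  map_add' A B := map_add (Matrix.toEuclideanCLM (𝕜 := ℝ)) (Matrix.of A) (Matrix.of B)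
  map_smul' c A := by
    show Matrix.toEuclideanCLM (𝕜 := ℝ) (Matrix.of (c • A)) = _
    have h : Matrix.of (c • A) = c • Matrix.of A := rfl
    rw [h, _root_.map_smul]
    rfl

lemma continuous_specNorm_pi (m : ℕ) :
    Continuous (fun M : Fin m → Fin m → ℝ => specNorm (Matrix.of M - Jmat m)) := by
  have h1 : Continuous (matCLM m) := (matCLM m).continuous_of_finiteDimensional
  have h2 : Continuous (fun M : Fin m → Fin m → ℝ =>
      matCLM m M - Matrix.toEuclideanCLM (𝕜 := ℝ) (Jmat m)) := h1.sub continuous_const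
  have heq : ∀ M : Fin m → Fin m → ℝ, specNorm (Matrix.of M - Jmat m)
      = ‖matCLM m M - Matrix.toEuclideanCLM (𝕜 := ℝ) (Jmat m)‖ := by
    intro M
    rw [specNorm, map_sub]
    rfl
  simp only [heq]
  exact h2.norm

end Meas


/-- For a random matrix `L` that is a.s. symmetric PSD with `L·1 = 0` and `W := I - L`
with `WᵀW` integrable (entrywise), `ρ := ‖E[WᵀW] - J‖` satisfies
`ρ ≤ E[max ((1 - λ₂(L))²) ((1 - λ_m(L))²)]`. -/
theorem rho_le_expect_max_eig_sq {m : ℕ} (hm : 2 ≤ m)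
    {Ω : Type*} [MeasurableSpace Ω] (μ : Measure Ω) [IsProbabilityMeasure μ]
    (L : Ω → Matrix (Fin m) (Fin m) ℝ)
    (hae : ∀ᵐ ω ∂μ, (L ω).PosSemidef ∧ (L ω) *ᵥ (fun _ => (1 : ℝ)) = 0)
    (hint : ∀ i j, Integrable
      (fun ω => (((1 - L ω)ᵀ * (1 - L ω) : Matrix (Fin m) (Fin m) ℝ)) i j) μ) :
    specNorm ((Matrix.of fun i j =>
        ∫ ω, (((1 - L ω)ᵀ * (1 - L ω) : Matrix (Fin m) (Fin m) ℝ)) i j ∂μ) - Jmat m)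
      ≤ ∫ ω, max ((1 - eigSorted (L ω) ⟨1, by omega⟩) ^ 2)
          ((1 - eigSorted (L ω) ⟨m - 1, by omega⟩) ^ 2) ∂μ := by
  set F : Ω → Matrix (Fin m) (Fin m) ℝ := fun ω => (1 - L ω)ᵀ * (1 - L ω) with hFdef
  set g : Ω → ℝ := fun ω => specNorm (F ω - Jmat m) with hgdef
  have hFsymm : ∀ ω, (F ω)ᵀ = F ω := fun ω => by
    rw [hFdef]
    rw [transpose_mul, transpose_transpose]
  have hFJt : ∀ ω, (F ω - Jmat m)ᵀ = F ω - Jmat m := fun ω => by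
    rw [transpose_sub, hFsymm ω, Jmat_transpose]
  -- a.e. identification of g with the eigenvalue quantity
  have hgc : g =ᵐ[μ] fun ω => max ((1 - eigSorted (L ω) ⟨1, by omega⟩) ^ 2)
      ((1 - eigSorted (L ω) ⟨m - 1, by omega⟩) ^ 2) := by
    filter_upwards [hae] with ω hω
    exact pointwise_spec hm hω.1 hω.2
  -- measurability and integrability of g
  have hFmeas : AEMeasurable (fun ω => (fun i j => F ω i j : Fin m → Fin m → ℝ)) μ := by
    have h : ∀ i j, AEMeasurable (fun ω => F ω i j) μ := fun i j => (hint i j).aemeasurable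
    refine ⟨fun ω i j => (h i j).mk _ ω, ?_, ?_⟩
    · rw [measurable_pi_iff]
      intro i
      rw [measurable_pi_iff]
      intro j
      exact (h i j).measurable_mk
    · have hael : ∀ᵐ ω ∂μ, ∀ i j, F ω i j = (h i j).mk _ ω :=
        ae_all_iff.2 fun i => ae_all_iff.2 fun j => (h i j).ae_eq_mk
      filter_upwards [hael] with ω hω
      funext i j
      exact hω i j
  have hgmeas : AEStronglyMeasurable g μ := by
    have hcont := continuous_specNorm_pi m
    have hgg : g = fun ω => (fun M : Fin m → Fin m → ℝ =>
        specNorm (Matrix.of M - Jmat m)) (fun i j => F ω i j) := rfl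
    rw [hgg]
    exact (hcont.measurable.comp_aemeasurable hFmeas).aestronglyMeasurable
  have hgint : Integrable g μ := by
    refine Integrable.mono' (g := fun ω => ∑ i, ∑ j, (|F ω i j| + (m : ℝ)⁻¹)) ?_ hgmeas ?_
    · exact integrable_finset_sum _ fun i _ => integrable_finset_sum _ fun j _ =>
        ((hint i j).abs.add (integrable_const _))
    · filter_upwards with ω
      rw [Real.norm_of_nonneg (specNorm_nonneg _)]
      calc g ω ≤ ∑ i, ∑ j, |(F ω - Jmat m) i j| := specNorm_le_sum_abs (hFJt ω)
        _ ≤ ∑ i, ∑ j, (|F ω i j| + (m : ℝ)⁻¹) := by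
            refine Finset.sum_le_sum fun i _ => Finset.sum_le_sum fun j _ => ?_
            rw [Matrix.sub_apply]
            refine (abs_sub _ _).trans ?_
            have hJ : |Jmat m i j| = (m : ℝ)⁻¹ := by
              have : (0:ℝ) ≤ (m : ℝ)⁻¹ := by positivity
              simp [Jmat, abs_of_nonneg this]
            rw [hJ]
  -- main bound : specNorm (M - J) ≤ ∫ g
  set M : Matrix (Fin m) (Fin m) ℝ := Matrix.of (fun i j => ∫ ω, F ω i j ∂μ) with hMdef
  have hMt : (M - Jmat m)ᵀ = M - Jmat m := by
    rw [transpose_sub, Jmat_transpose]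
    congr 1
    ext i j
    rw [transpose_apply]
    show (∫ ω, F ω j i ∂μ) = ∫ ω, F ω i j ∂μ
    congr 1
    funext ω
    conv_lhs => rw [← hFsymm ω]
    rw [transpose_apply]
  have hir : 0 ≤ ∫ ω, g ω ∂μ := integral_nonneg fun ω => specNorm_nonneg _
  have hspec : specNorm (M - Jmat m) ≤ ∫ ω, g ω ∂μ := by
    apply specNorm_le_of_quad hMt hir
    intro x
    have hQint : ∀ i j, Integrable (fun ω => (F ω i j - Jmat m i j) * x j * x i) μ :=
      fun i j => (((hint i j).sub (integrable_const _)).mul_const _).mul_const _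
    have hQsum : ∀ ω, ((F ω - Jmat m) *ᵥ x) ⬝ᵥ x
        = ∑ i, ∑ j, (F ω i j - Jmat m i j) * x j * x i := by
      intro ω
      rw [quad_sum]
      exact Finset.sum_congr rfl fun i _ => Finset.sum_congr rfl fun j _ => by
        rw [Matrix.sub_apply]
    have hQint' : Integrable (fun ω => ((F ω - Jmat m) *ᵥ x) ⬝ᵥ x) μ := by
      have h : (fun ω => ((F ω - Jmat m) *ᵥ x) ⬝ᵥ x)
          = fun ω => ∑ i, ∑ j, (F ω i j - Jmat m i j) * x j * x i := funext hQsum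
      rw [h]
      exact integrable_finset_sum _ fun i _ => integrable_finset_sum _ fun j _ => hQint i j
    have hswap : ((M - Jmat m) *ᵥ x) ⬝ᵥ x = ∫ ω, ((F ω - Jmat m) *ᵥ x) ⬝ᵥ x ∂μ := by
      rw [quad_sum]
      have hentry : ∀ i j, (M - Jmat m) i j = ∫ ω, (F ω i j - Jmat m i j) ∂μ := by
        intro i j
        have hh : (∫ ω, (F ω i j - Jmat m i j) ∂μ) = (∫ ω, F ω i j ∂μ) - Jmat m i j := by
          rw [integral_sub (hint i j) (integrable_const _), integral_const, probReal_univ,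
            one_smul]
        rw [Matrix.sub_apply, hh]
        rfl
      calc ∑ i, ∑ j, (M - Jmat m) i j * x j * x i
          = ∑ i, ∑ j, ∫ ω, (F ω i j - Jmat m i j) * x j * x i ∂μ := by
            refine Finset.sum_congr rfl fun i _ => Finset.sum_congr rfl fun j _ => ?_
            rw [hentry i j, ← integral_mul_const, ← integral_mul_const]
        _ = ∫ ω, ∑ i, ∑ j, (F ω i j - Jmat m i j) * x j * x i ∂μ := by
            rw [integral_finset_sum _ fun i _ =>
              integrable_finset_sum _ fun j _ => hQint i j]
            exact Finset.sum_congr rfl fun i _ =>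
              (integral_finset_sum _ fun j _ => hQint i j).symm
        _ = ∫ ω, ((F ω - Jmat m) *ᵥ x) ⬝ᵥ x ∂μ := by
            congr 1
            funext ω
            rw [hQsum ω]
    rw [hswap]
    have habs : |∫ ω, ((F ω - Jmat m) *ᵥ x) ⬝ᵥ x ∂μ|
        ≤ ∫ ω, |((F ω - Jmat m) *ᵥ x) ⬝ᵥ x| ∂μ := by
      have := norm_integral_le_integral_norm (μ := μ)
        (f := fun ω => ((F ω - Jmat m) *ᵥ x) ⬝ᵥ x)
      simpa [Real.norm_eq_abs] using this
    refine habs.trans ?_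
    have hmono : ∫ ω, |((F ω - Jmat m) *ᵥ x) ⬝ᵥ x| ∂μ ≤ ∫ ω, g ω * (x ⬝ᵥ x) ∂μ := by
      refine integral_mono hQint'.abs (hgint.mul_const _) fun ω => ?_
      exact quad_abs_le_specNorm (F ω - Jmat m) x
    refine hmono.trans ?_
    rw [integral_mul_const]
  refine le_trans hspec ?_
  exact le_of_eq (integral_congr_ae hgc)
end Bridge
end

section
/- Let W : Ω → ℝ^{m×m} be a random matrix that is almost surely symmetric with each row and each column summing to one, such that WᵀW is Bochner-integrable, and let ρ := ‖E[WᵀW] - J‖. Then for every real d×m matrix A (for any d ≥ 1), E[‖A(W - J)‖_F²] ≤ ρ·‖A‖_F². -/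
open Matrix MeasureTheory

/-- The Frobenius norm of a real `d × m` matrix. -/
noncomputable def frobNorm {d m : ℕ} (A : Matrix (Fin d) (Fin m) ℝ) : ℝ :=
  Real.sqrt (∑ i, ∑ j, (A i j) ^ 2)

/-- Quadratic form bound by the spectral norm. -/
lemma quad_le_spec {m : ℕ} (B : Matrix (Fin m) (Fin m) ℝ) (x : Fin m → ℝ) :
    ∑ k, ∑ l, x k * x l * B k l ≤ specNorm B * ∑ k, x k ^ 2 := by
  set y : EuclideanSpace ℝ (Fin m) := (WithLp.equiv 2 (Fin m → ℝ)).symm x with hy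
  have hinner : ∑ k, ∑ l, x k * x l * B k l
      = inner ℝ y (Matrix.toEuclideanCLM (𝕜 := ℝ) (n := Fin m) B y) := by
    have happ : Matrix.toEuclideanCLM (𝕜 := ℝ) (n := Fin m) B y
        = (WithLp.equiv 2 (Fin m → ℝ)).symm (B *ᵥ x) := by
      rw [hy]; exact Matrix.toEuclideanCLM_toLp B x
    rw [happ]
    rw [show (inner ℝ y ((WithLp.equiv 2 (Fin m → ℝ)).symm (B *ᵥ x)) : ℝ)
        = ∑ k, x k * (B *ᵥ x) k by simp [hy, PiLp.inner_apply, mul_comm]]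
    simp only [Matrix.mulVec, dotProduct, Finset.mul_sum]
    exact Finset.sum_congr rfl fun k _ => Finset.sum_congr rfl fun l _ => by ring
  have hnorm : ‖y‖ ^ 2 = ∑ k, x k ^ 2 := by
    rw [EuclideanSpace.norm_eq, Real.sq_sqrt (by positivity)]
    exact Finset.sum_congr rfl fun k _ => by
      rw [Real.norm_eq_abs, sq_abs]; rfl
  calc ∑ k, ∑ l, x k * x l * B k l
      = inner ℝ y (Matrix.toEuclideanCLM (𝕜 := ℝ) (n := Fin m) B y) := hinner
    _ ≤ ‖y‖ * ‖Matrix.toEuclideanCLM (𝕜 := ℝ) (n := Fin m) B y‖ := real_inner_le_norm _ _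
    _ ≤ ‖y‖ * (specNorm B * ‖y‖) := by
        exact mul_le_mul_of_nonneg_left
          ((Matrix.toEuclideanCLM (𝕜 := ℝ) (n := Fin m) B).le_opNorm y) (norm_nonneg y)
    _ = specNorm B * ‖y‖ ^ 2 := by ring
    _ = specNorm B * ∑ k, x k ^ 2 := by rw [hnorm]

/-- For a random matrix `W` that is a.s. symmetric with every row and column summing to
one, with `WᵀW` integrable (entrywise), and `ρ := ‖E[WᵀW] - J‖`: for every real `d × m`
matrix `A`, `E[‖A(W - J)‖_F²] ≤ ρ·‖A‖_F²`. -/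
theorem expect_frob_le_rho_frob {m : ℕ} (hm : 2 ≤ m)
    {Ω : Type*} [MeasurableSpace Ω] (μ : Measure Ω) [IsProbabilityMeasure μ]
    (W : Ω → Matrix (Fin m) (Fin m) ℝ)
    (hae : ∀ᵐ ω ∂μ, (W ω).IsSymm ∧ (∀ i, ∑ j, W ω i j = 1) ∧ (∀ j, ∑ i, W ω i j = 1))
    (hint : ∀ i j, Integrable
      (fun ω => (((W ω)ᵀ * W ω : Matrix (Fin m) (Fin m) ℝ)) i j) μ)
    (ρ : ℝ)
    (hρ : ρ = specNorm ((Matrix.of fun i j =>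
        ∫ ω, (((W ω)ᵀ * W ω : Matrix (Fin m) (Fin m) ℝ)) i j ∂μ) - Jmat m))
    (d : ℕ) (A : Matrix (Fin d) (Fin m) ℝ) :
    ∫ ω, frobNorm (A * (W ω - Jmat m)) ^ 2 ∂μ ≤ ρ * frobNorm A ^ 2 := by
  have hm0 : (m : ℝ) ≠ 0 := by positivity
  set c : ℝ := (m : ℝ)⁻¹ with hc
  -- pointwise identity on the a.s. set
  have hpt : ∀ᵐ ω ∂μ, frobNorm (A * (W ω - Jmat m)) ^ 2
      = ∑ i, ∑ k, ∑ l, A i k * A i l * (((W ω)ᵀ * W ω) k l - c) := by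
    filter_upwards [hae] with ω hω
    obtain ⟨hsym, hrow, _⟩ := hω
    have hsym' : ∀ k j, W ω j k = W ω k j := fun k j => by
      have := congrFun (congrFun hsym.eq j) k
      simpa [Matrix.transpose_apply] using this.symm
    have key : ∀ k l, ∑ j, (W ω k j - c) * (W ω l j - c) = ((W ω)ᵀ * W ω) k l - c := by
      intro k l
      have hexp : ∀ j, (W ω k j - c) * (W ω l j - c)
          = W ω j k * W ω j l - c * W ω k j - c * W ω l j + c * c := by
        intro j; rw [hsym' k j, hsym' l j]; ring
      rw [Finset.sum_congr rfl fun j _ => hexp j]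
      simp only [Finset.sum_add_distrib, Finset.sum_sub_distrib, ← Finset.mul_sum,
        hrow k, hrow l, Matrix.mul_apply, Matrix.transpose_apply, Finset.sum_const,
        Finset.card_univ, Fintype.card_fin, nsmul_eq_mul]
      have h1 : c * ((m:ℝ) * c) = c := by rw [hc, mul_inv_cancel₀ hm0, mul_one]
      rw [h1]; ring
    have hsq : frobNorm (A * (W ω - Jmat m)) ^ 2
        = ∑ i, ∑ j, ((A * (W ω - Jmat m)) i j) ^ 2 := by
      rw [frobNorm, Real.sq_sqrt (by positivity)]
    rw [hsq]
    refine Finset.sum_congr rfl fun i _ => ?_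
    have : ∀ j, ((A * (W ω - Jmat m)) i j) ^ 2
        = ∑ k, ∑ l, (A i k * (W ω k j - c)) * (A i l * (W ω l j - c)) := by
      intro j
      rw [Matrix.mul_apply, sq, Finset.sum_mul_sum]
      simp [Matrix.sub_apply, Jmat, hc]
    rw [Finset.sum_congr rfl fun j _ => this j, Finset.sum_comm]
    refine Finset.sum_congr rfl fun k _ => ?_
    rw [Finset.sum_comm]
    refine Finset.sum_congr rfl fun l _ => ?_
    rw [← key k l, Finset.mul_sum]
    exact Finset.sum_congr rfl fun j _ => by ring
  -- integrate
  have hintterm : ∀ (i : Fin d) (k l : Fin m),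
      Integrable (fun ω => A i k * A i l * (((W ω)ᵀ * W ω) k l - c)) μ :=
    fun i k l => ((hint k l).sub (integrable_const c)).const_mul _
  have hInt : ∫ ω, frobNorm (A * (W ω - Jmat m)) ^ 2 ∂μ
      = ∑ i, ∑ k, ∑ l, A i k * A i l
          * ((∫ ω, ((W ω)ᵀ * W ω) k l ∂μ) - c) := by
    rw [integral_congr_ae hpt]
    rw [integral_finset_sum _ (fun i _ => integrable_finset_sum _
      (fun k _ => integrable_finset_sum _ (fun l _ => hintterm i k l)))]
    refine Finset.sum_congr rfl fun i _ => ?_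
    rw [integral_finset_sum _ (fun k _ => integrable_finset_sum _ (fun l _ => hintterm i k l))]
    refine Finset.sum_congr rfl fun k _ => ?_
    rw [integral_finset_sum _ (fun l _ => hintterm i k l)]
    refine Finset.sum_congr rfl fun l _ => ?_
    rw [integral_const_mul, integral_sub (hint k l) (integrable_const c)]
    simp
  rw [hInt]
  set B : Matrix (Fin m) (Fin m) ℝ := (Matrix.of fun i j =>
      ∫ ω, (((W ω)ᵀ * W ω : Matrix (Fin m) (Fin m) ℝ)) i j ∂μ) - Jmat m with hB
  have hBkl : ∀ k l, (∫ ω, ((W ω)ᵀ * W ω) k l ∂μ) - c = B k l := by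
    intro k l; simp [hB, Jmat, hc, Matrix.sub_apply]
  have hfA : frobNorm A ^ 2 = ∑ i, ∑ k, A i k ^ 2 := by
    rw [frobNorm, Real.sq_sqrt (by positivity)]
  rw [hρ, hfA, Finset.mul_sum]
  refine Finset.sum_le_sum fun i _ => ?_
  calc ∑ k, ∑ l, A i k * A i l * ((∫ ω, ((W ω)ᵀ * W ω) k l ∂μ) - c)
      = ∑ k, ∑ l, A i k * A i l * B k l := by
        exact Finset.sum_congr rfl fun k _ => Finset.sum_congr rfl fun l _ => by rw [hBkl]
    _ ≤ specNorm B * ∑ k, A i k ^ 2 := quad_le_spec B (fun k => A i k)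
end

section
/- Let W : Ω → ℝ^{m×m} be a random matrix that is almost surely symmetric with each row and each column summing to one, such that WᵀW is Bochner-integrable, and let ρ := ‖E[WᵀW] - J‖. Then for every real d×m matrix X (for any d ≥ 1), E[‖X(W - J)‖_F²] ≤ ρ·‖X(I - J)‖_F². -/
open Matrix MeasureTheory

lemma frob_sq {d m : ℕ} (A : Matrix (Fin d) (Fin m) ℝ) :
    frobNorm A ^ 2 = ∑ i, ∑ j, (A i j) ^ 2 := by
  apply Real.sq_sqrt
  positivity

lemma quad_le {m : ℕ} (M : Matrix (Fin m) (Fin m) ℝ) (v : Fin m → ℝ) :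
    ∑ j, ∑ k, v j * M j k * v k ≤ specNorm M * ∑ j, v j ^ 2 := by
  set x : EuclideanSpace ℝ (Fin m) := (WithLp.equiv 2 _).symm v with hx
  set T := Matrix.toEuclideanCLM (𝕜 := ℝ) (n := Fin m) M with hT
  have hTx : T x = (WithLp.equiv 2 _).symm (M *ᵥ v) := by
    rw [hx]; rfl
  have h1 : (inner ℝ x (T x) : ℝ) = ∑ j, ∑ k, v j * M j k * v k := by
    rw [hTx]
    simp only [PiLp.inner_apply, RCLike.inner_apply, starRingEnd_apply, star_trivial,
      WithLp.equiv_symm_apply, WithLp.ofLp_toLp, Matrix.mulVec, dotProduct, hx]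
    refine Finset.sum_congr rfl fun j _ => ?_
    rw [Finset.sum_mul]
    exact Finset.sum_congr rfl fun k _ => by ring
  have h2 : ‖x‖ ^ 2 = ∑ j, v j ^ 2 := by
    rw [EuclideanSpace.norm_eq, Real.sq_sqrt (by positivity)]
    simp [hx, sq_abs]
  calc ∑ j, ∑ k, v j * M j k * v k = inner ℝ x (T x) := h1.symm
    _ ≤ ‖x‖ * ‖T x‖ := real_inner_le_norm x (T x)
    _ ≤ ‖x‖ * (‖T‖ * ‖x‖) := by
        exact mul_le_mul_of_nonneg_left (T.le_opNorm x) (norm_nonneg x)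
    _ = specNorm M * ∑ j, v j ^ 2 := by rw [← h2, specNorm, ← hT]; ring

lemma sandwich_diag {d m : ℕ} (X : Matrix (Fin d) (Fin m) ℝ) (C : Matrix (Fin m) (Fin m) ℝ)
    (i : Fin d) : (X * C * Xᵀ) i i = ∑ j, ∑ k, X i j * C j k * X i k := by
  simp only [Matrix.mul_apply, Matrix.transpose_apply, Finset.sum_mul]
  rw [Finset.sum_comm]

lemma keyA {m : ℕ} (hm : (m : ℝ) ≠ 0) (W : Matrix (Fin m) (Fin m) ℝ) (hs : W.IsSymm)
    (hr : ∀ i, ∑ j, W i j = 1) :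
    (W - Jmat m) * (W - Jmat m)ᵀ = Wᵀ * W - Jmat m := by
  ext j k
  simp only [Matrix.sub_apply, Matrix.mul_apply, Matrix.transpose_apply, Jmat, Matrix.of_apply]
  have step : ∀ l : Fin m, (W j l - (m:ℝ)⁻¹) * (W k l - (m:ℝ)⁻¹)
      = W l j * W l k - (m:ℝ)⁻¹ * W j l - (m:ℝ)⁻¹ * W k l + (m:ℝ)⁻¹ * (m:ℝ)⁻¹ := by
    intro l
    rw [hs.apply l j, hs.apply l k]
    ring
  rw [Finset.sum_congr rfl fun l _ => step l]
  simp only [Finset.sum_add_distrib, Finset.sum_sub_distrib, ← Finset.mul_sum, hr j, hr k,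
    Finset.sum_const, Finset.card_univ, Fintype.card_fin, nsmul_eq_mul]
  field_simp
  ring

lemma frob_sq' {d m : ℕ} (A : Matrix (Fin d) (Fin m) ℝ) :
    frobNorm A ^ 2 = ∑ i, (A * Aᵀ) i i := by
  rw [frob_sq]
  exact Finset.sum_congr rfl fun i _ => by simp [Matrix.mul_apply, sq]

set_option maxHeartbeats 1000000 in
/-- For a random matrix `W` that is a.s. symmetric with every row and column summing to
one, with `WᵀW` integrable (entrywise), and `ρ := ‖E[WᵀW] - J‖`: for every real `d × m`
matrix `X`, `E[‖X(W - J)‖_F²] ≤ ρ·‖X(I - J)‖_F²`. -/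
theorem expect_frob_le_rho_frob_proj {m : ℕ} (hm : 2 ≤ m)
    {Ω : Type*} [MeasurableSpace Ω] (μ : Measure Ω) [IsProbabilityMeasure μ]
    (W : Ω → Matrix (Fin m) (Fin m) ℝ)
    (hae : ∀ᵐ ω ∂μ, (W ω).IsSymm ∧ (∀ i, ∑ j, W ω i j = 1) ∧ (∀ j, ∑ i, W ω i j = 1))
    (hint : ∀ i j, Integrable
      (fun ω => (((W ω)ᵀ * W ω : Matrix (Fin m) (Fin m) ℝ)) i j) μ)
    (ρ : ℝ)
    (hρ : ρ = specNorm ((Matrix.of fun i j =>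
        ∫ ω, (((W ω)ᵀ * W ω : Matrix (Fin m) (Fin m) ℝ)) i j ∂μ) - Jmat m))
    (d : ℕ) (X : Matrix (Fin d) (Fin m) ℝ) :
    ∫ ω, frobNorm (X * (W ω - Jmat m)) ^ 2 ∂μ
      ≤ ρ * frobNorm (X * (1 - Jmat m)) ^ 2 := by
  have hm0 : (m : ℝ) ≠ 0 := by
    have h2 : (0:ℕ) < m := lt_of_lt_of_le (by norm_num) hm
    exact_mod_cast h2.ne'
  set E : Matrix (Fin m) (Fin m) ℝ :=
    Matrix.of (fun i j => ∫ ω, (((W ω)ᵀ * W ω : Matrix (Fin m) (Fin m) ℝ)) i j ∂μ) with hE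
  set M : Matrix (Fin m) (Fin m) ℝ := E - Jmat m with hMdef
  -- integrability of summands
  have hterm : ∀ (i : Fin d) (j k : Fin m), Integrable
      (fun ω => (X i j * X i k) * ((((W ω)ᵀ * W ω : Matrix (Fin m) (Fin m) ℝ)) j k
        - Jmat m j k)) μ :=
    fun i j k => (((hint j k).sub (integrable_const _)).const_mul _)
  -- a.e. identity for the integrand
  have heq : (fun ω => frobNorm (X * (W ω - Jmat m)) ^ 2)
      =ᵐ[μ] fun ω => ∑ i, ∑ j, ∑ k, (X i j * X i k)
        * ((((W ω)ᵀ * W ω : Matrix (Fin m) (Fin m) ℝ)) j k - Jmat m j k) := by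
    filter_upwards [hae] with ω hω
    obtain ⟨hsym, hrow, hcol⟩ := hω
    have hB : X * (W ω - Jmat m) * (X * (W ω - Jmat m))ᵀ
        = X * ((W ω)ᵀ * W ω - Jmat m) * Xᵀ := by
      rw [Matrix.transpose_mul, ← Matrix.mul_assoc, Matrix.mul_assoc X,
        keyA hm0 (W ω) hsym hrow]
    rw [frob_sq', hB]
    refine Finset.sum_congr rfl fun i _ => ?_
    rw [sandwich_diag]
    exact Finset.sum_congr rfl fun j _ => Finset.sum_congr rfl fun k _ => by
      simp only [Matrix.sub_apply]; ring
  -- compute the integral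
  have key1 : ∫ ω, frobNorm (X * (W ω - Jmat m)) ^ 2 ∂μ
      = ∑ i, ∑ j, ∑ k, (X i j * X i k) * M j k := by
    rw [integral_congr_ae heq,
      integral_finset_sum _ (fun i _ => integrable_finset_sum _
        (fun j _ => integrable_finset_sum _ (fun k _ => hterm i j k)))]
    refine Finset.sum_congr rfl fun i _ => ?_
    rw [integral_finset_sum _ (fun j _ => integrable_finset_sum _ (fun k _ => hterm i j k))]
    refine Finset.sum_congr rfl fun j _ => ?_
    rw [integral_finset_sum _ (fun k _ => hterm i j k)]
    refine Finset.sum_congr rfl fun k _ => ?_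
    rw [integral_const_mul, integral_sub (hint j k) (integrable_const _), integral_const,
      probReal_univ, one_smul]
    simp [hMdef, hE, Matrix.sub_apply]
  -- row sums of E are 1
  have hErow : ∀ j, ∑ k, E j k = 1 := by
    intro j
    have h1 : ∑ k, E j k
        = ∫ ω, ∑ k, (((W ω)ᵀ * W ω : Matrix (Fin m) (Fin m) ℝ)) j k ∂μ :=
      (integral_finset_sum _ (fun k _ => hint j k)).symm
    have h2 : (fun ω => ∑ k, (((W ω)ᵀ * W ω : Matrix (Fin m) (Fin m) ℝ)) j k)
        =ᵐ[μ] fun _ => (1:ℝ) := by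
      filter_upwards [hae] with ω hω
      obtain ⟨hsym, hrow, hcol⟩ := hω
      simp only [Matrix.mul_apply, Matrix.transpose_apply]
      rw [Finset.sum_comm]
      calc ∑ l, ∑ k, W ω l j * W ω l k = ∑ l, W ω l j * ∑ k, W ω l k := by
            exact Finset.sum_congr rfl fun l _ => (Finset.mul_sum _ _ _).symm
        _ = ∑ l, W ω l j := by
            refine Finset.sum_congr rfl fun l _ => ?_
            rw [hrow l, mul_one]
        _ = 1 := hcol j
    rw [h1, integral_congr_ae h2]
    simp
  -- symmetry of E
  have hEsymm : ∀ j k, E j k = E k j := by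
    intro j k
    simp only [hE, Matrix.of_apply]
    congr 1
    funext ω
    simp only [Matrix.mul_apply, Matrix.transpose_apply]
    exact Finset.sum_congr rfl fun l _ => mul_comm _ _
  have hJrow : ∀ j : Fin m, ∑ k, Jmat m j k = 1 := by
    intro j
    simp [Jmat, Finset.sum_const, mul_inv_cancel₀ hm0]
  have hMrow : ∀ j, ∑ k, M j k = 0 := by
    intro j
    simp only [hMdef, Matrix.sub_apply, Finset.sum_sub_distrib, hErow j, hJrow j, sub_self]
  have hMsymm : ∀ j k, M j k = M k j := by
    intro j k
    simp only [hMdef, Matrix.sub_apply, hEsymm j k, Jmat, Matrix.of_apply]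
  have hMJ : M * Jmat m = 0 := by
    ext a b
    simp only [Matrix.mul_apply, Jmat, Matrix.of_apply, Matrix.zero_apply]
    rw [← Finset.sum_mul, hMrow a, zero_mul]
  have hJM : Jmat m * M = 0 := by
    ext a b
    simp only [Matrix.mul_apply, Jmat, Matrix.of_apply, Matrix.zero_apply]
    rw [← Finset.mul_sum]
    have : ∑ l, M l b = 0 := by
      rw [Finset.sum_congr rfl fun l _ => hMsymm l b, hMrow b]
    rw [this, mul_zero]
  have hJt : (1 - Jmat m)ᵀ = 1 - Jmat m := by
    ext a b
    simp [Matrix.transpose_apply, Matrix.sub_apply, Jmat, Matrix.one_apply, eq_comm]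
  have hfix1 : (1 - Jmat m) * M = M := by rw [sub_mul, one_mul, hJM, sub_zero]
  have hfix2 : M * (1 - Jmat m) = M := by rw [mul_sub, mul_one, hMJ, sub_zero]
  have hXMX : X * M * Xᵀ = (X * (1 - Jmat m)) * M * (X * (1 - Jmat m))ᵀ := by
    rw [Matrix.transpose_mul, hJt, Matrix.mul_assoc X (1 - Jmat m) M, hfix1,
      ← Matrix.mul_assoc (X * M) (1 - Jmat m) Xᵀ, Matrix.mul_assoc X M (1 - Jmat m), hfix2]
  have c1 : ∑ i, ∑ j, ∑ k, (X i j * X i k) * M j k = ∑ i, (X * M * Xᵀ) i i := by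
    refine Finset.sum_congr rfl fun i _ => ?_
    rw [sandwich_diag]
    exact Finset.sum_congr rfl fun j _ => Finset.sum_congr rfl fun k _ => by ring
  set Y : Matrix (Fin d) (Fin m) ℝ := X * (1 - Jmat m) with hYdef
  have c2 : ∑ i, (X * M * Xᵀ) i i = ∑ i, ∑ j, ∑ k, Y i j * M j k * Y i k := by
    rw [hXMX]
    exact Finset.sum_congr rfl fun i _ => sandwich_diag _ _ i
  have c3 : ∑ i, ∑ j, ∑ k, Y i j * M j k * Y i k
      ≤ ∑ i, specNorm M * ∑ j, Y i j ^ 2 :=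
    Finset.sum_le_sum fun i _ => quad_le M (fun j => Y i j)
  have c4 : ∑ i, specNorm M * ∑ j, Y i j ^ 2
      = ρ * frobNorm Y ^ 2 := by
    rw [frob_sq, hρ, Finset.mul_sum]
  rw [key1, c1, c2, ← c4]
  exact c3
end
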